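/- arXiv:1305.0216 — 2 statements merged into one kernel-verified Lean document; each statement's English description precedes it below -/
import Mathlib

section
/- There exist infinitely many rational numbers c such that the map f_c(z) = z^2 + c has exactly 4 rational preperiodic points, of which exactly 2 are periodic, and these two periodic points form a cycle of exact length 2 (i.e., f_c interchanges two distinct rational points). (This data characterizes the directed graph 4(2).) -/
/-- The quadratic map `f_c(z) = z² + c`. -/
def fc (c : ℚ) : ℚ → ℚ := fun z => z ^ 2 + c

/-- `x` is preperiodic for `f_c`: its forward orbit is eventually periodic. -/
def IsPreper (c x : ℚ) : Prop := ∃ m n : ℕ, m < n ∧ (fc c)^[m] x = (fc c)^[n] x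

/-- `x` is periodic for `f_c`. -/
def IsPer (c x : ℚ) : Prop := ∃ n : ℕ, 1 ≤ n ∧ (fc c)^[n] x = x

/-!
For `c = -(a² + a + 1)` the map `f_c` swaps `a` and `-a - 1`, and `-a`, `a + 1` are the other
preimages of this 2-cycle. Since `c` is an integer, `f_c` squares denominators, so every rational
preperiodic point is an integer. Integers `x` with `|x| ≥ a + 2` have orbits whose absolute values
increase strictly, and integers with `|x| ≤ a - 1` are sent below `-3a`, so for `a ≥ 1` the
preperiodic points are exactly `±a, ±(a + 1)`.
-/

theorem fc_neg (c x : ℚ) : fc c (-x) = fc c x := by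
  simp only [fc, neg_sq]

theorem isPreper_fc_iff {c x : ℚ} : IsPreper c (fc c x) ↔ IsPreper c x := by
  constructor
  · rintro ⟨m, n, hmn, he⟩
    exact ⟨m + 1, n + 1, by omega, he⟩
  · rintro ⟨m, n, hmn, he⟩
    refine ⟨m, n, hmn, ?_⟩
    rw [← Function.iterate_succ_apply, ← Function.iterate_succ_apply,
      Function.iterate_succ_apply', Function.iterate_succ_apply', he]

theorem isPreper_neg_iff {c x : ℚ} : IsPreper c (-x) ↔ IsPreper c x := by
  rw [← isPreper_fc_iff, fc_neg, isPreper_fc_iff]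

theorem IsPer.isPreper {c x : ℚ} (h : IsPer c x) : IsPreper c x := by
  obtain ⟨n, hn, he⟩ := h
  exact ⟨0, n, hn, he.symm⟩

theorem isPer_of_fc_fc {c x : ℚ} (h : fc c (fc c x) = x) : IsPer c x :=
  ⟨2, one_le_two, h⟩

theorem not_isPer_of_mapsTo {c x : ℚ} {S : Set ℚ} (hS : Set.MapsTo (fc c) S S)
    (hx : x ∉ S) (hfx : fc c x ∈ S) : ¬IsPer c x := by
  rintro ⟨_ | n, hn, he⟩
  · omega
  rw [Function.iterate_succ_apply] at he
  exact hx (he ▸ hS.iterate n hfx)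

theorem den_fc_intCast (c : ℤ) (q : ℚ) : (fc c q).den = q.den ^ 2 := by
  rw [fc, Rat.add_intCast_den, Rat.den_pow]

theorem den_iterate_fc_intCast (c : ℤ) (n : ℕ) (q : ℚ) :
    ((fc c)^[n] q).den = q.den ^ 2 ^ n := by
  induction n with
  | zero => simp
  | succ n ih => rw [Function.iterate_succ_apply', den_fc_intCast, ih, ← pow_mul, ← pow_succ]

theorem IsPreper.den_eq_one {c : ℤ} {x : ℚ} (h : IsPreper c x) : x.den = 1 := by
  obtain ⟨m, n, hmn, he⟩ := h
  by_contra hx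
  have hden := congrArg Rat.den he
  rw [den_iterate_fc_intCast, den_iterate_fc_intCast] at hden
  have h2 : 2 ≤ x.den := by have := x.den_pos; omega
  exact hmn.ne (Nat.pow_right_injective le_rfl (Nat.pow_right_injective h2 hden))

theorem lt_abs_fc_of_le_abs {c r x : ℚ} (hr : 1 ≤ 2 * r) (hrc : r < r ^ 2 + c)
    (hx : r ≤ |x|) : |x| < |fc c x| := by
  have hsq : r ^ 2 - r ≤ |x| ^ 2 - |x| := by nlinarith
  calc |x| < x ^ 2 + c := by rw [← sq_abs]; linarith
    _ ≤ |fc c x| := le_abs_self _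

theorem not_isPreper_of_le_abs {c r x : ℚ} (hr : 1 ≤ 2 * r) (hrc : r < r ^ 2 + c)
    (hx : r ≤ |x|) : ¬IsPreper c x := by
  have hfar : ∀ n, r ≤ |(fc c)^[n] x| := by
    intro n
    induction n with
    | zero => exact hx
    | succ n ih =>
      rw [Function.iterate_succ_apply']
      exact ih.trans (lt_abs_fc_of_le_abs hr hrc ih).le
  have hmono : StrictMono fun n => |(fc c)^[n] x| := strictMono_nat_of_lt_succ fun n => by
    simpa only [Function.iterate_succ_apply'] using lt_abs_fc_of_le_abs hr hrc (hfar n)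
  rintro ⟨m, n, hmn, he⟩
  exact (hmono hmn).ne (congrArg abs he)

def twoCycleParam (a : ℤ) : ℤ := -(a ^ 2 + a + 1)

section TwoCycleParam

variable {a : ℤ}

theorem fc_twoCycleParam_self (a : ℤ) : fc (twoCycleParam a) a = -a - 1 := by
  simp only [fc, twoCycleParam]; push_cast; ring

theorem fc_twoCycleParam_neg_sub_one (a : ℤ) : fc (twoCycleParam a) (-a - 1) = a := by
  simp only [fc, twoCycleParam]; push_cast; ring

theorem eq_of_isPreper_twoCycleParam_intCast (ha : 1 ≤ a) {n : ℤ}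
    (h : IsPreper (twoCycleParam a) n) : n = a ∨ n = -a - 1 ∨ n = -a ∨ n = a + 1 := by
  have hescape : ∀ m : ℤ, a + 2 ≤ |m| → ¬IsPreper (twoCycleParam a) m := by
    intro m hm
    have haq : (1 : ℚ) ≤ a := by exact_mod_cast ha
    exact not_isPreper_of_le_abs (r := a + 2) (by linarith)
      (by push_cast [twoCycleParam]; nlinarith) (by exact_mod_cast hm)
  by_contra hn
  by_cases hfar : a + 2 ≤ |n|
  · exact hescape n hfar h
  have hnear : |n| ≤ a - 1 := by
    rw [le_abs', not_or] at hfar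
    rw [abs_le]
    omega
  -- `f_c n ≤ (a - 1) ^ 2 - (a ^ 2 + a + 1) = -3a`, so the image escapes
  have hsq : n ^ 2 ≤ (a - 1) ^ 2 := sq_abs n ▸ pow_le_pow_left₀ (abs_nonneg n) hnear 2
  refine hescape (n ^ 2 + twoCycleParam a) (le_abs'.2 (Or.inl ?_)) ?_
  · rw [twoCycleParam]
    nlinarith
  · push_cast
    exact isPreper_fc_iff.2 h

theorem isPer_twoCycleParam_self (a : ℤ) : IsPer (twoCycleParam a) a :=
  isPer_of_fc_fc (by rw [fc_twoCycleParam_self, fc_twoCycleParam_neg_sub_one])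

theorem isPer_twoCycleParam_neg_sub_one (a : ℤ) : IsPer (twoCycleParam a) (-a - 1) :=
  isPer_of_fc_fc (by rw [fc_twoCycleParam_neg_sub_one, fc_twoCycleParam_self])

theorem setOf_isPreper_twoCycleParam (ha : 1 ≤ a) :
    {x : ℚ | IsPreper (twoCycleParam a) x} = {(a : ℚ), -(a : ℚ) - 1, -(a : ℚ), (a : ℚ) + 1} := by
  ext x
  simp only [Set.mem_ofPred_eq, Set.mem_insert_iff, Set.mem_singleton_iff]
  constructor
  · intro h
    obtain ⟨n, rfl⟩ : ∃ n : ℤ, x = n := ⟨x.num, (Rat.coe_int_num_of_den_eq_one h.den_eq_one).symm⟩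
    rcases eq_of_isPreper_twoCycleParam_intCast ha h with rfl | rfl | rfl | rfl <;> push_cast <;> simp
  · rintro (rfl | rfl | rfl | rfl)
    · exact (isPer_twoCycleParam_self a).isPreper
    · exact (isPer_twoCycleParam_neg_sub_one a).isPreper
    · exact isPreper_neg_iff.2 (isPer_twoCycleParam_self a).isPreper
    · rw [← isPreper_neg_iff, neg_add']
      exact (isPer_twoCycleParam_neg_sub_one a).isPreper

theorem ncard_setOf_isPreper_twoCycleParam (ha : 1 ≤ a) :
    {x : ℚ | IsPreper (twoCycleParam a) x}.ncard = 4 := by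
  have haq : (1 : ℚ) ≤ a := by exact_mod_cast ha
  rw [setOf_isPreper_twoCycleParam ha, Set.ncard_eq_four]
  refine ⟨_, _, _, _, ?_, ?_, ?_, ?_, ?_, ?_, rfl⟩ <;> intro h <;> linarith

theorem setOf_isPer_twoCycleParam (ha : 1 ≤ a) :
    {x : ℚ | IsPer (twoCycleParam a) x} = {(a : ℚ), -(a : ℚ) - 1} := by
  have haq : (1 : ℚ) ≤ a := by exact_mod_cast ha
  have hcycle : Set.MapsTo (fc (twoCycleParam a)) {(a : ℚ), -(a : ℚ) - 1} {(a : ℚ), -(a : ℚ) - 1} := by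
    rintro _ (rfl | rfl) <;> simp [fc_twoCycleParam_self, fc_twoCycleParam_neg_sub_one]
  ext x
  constructor
  · intro h
    rcases (setOf_isPreper_twoCycleParam ha).subset h.isPreper with hx | hx | rfl | rfl
    · exact Or.inl hx
    · exact Or.inr hx
    · refine absurd h (not_isPer_of_mapsTo hcycle ?_ ?_)
      · rintro (h | h : _ = _ ∨ _ = _) <;> linarith
      · simp [fc_neg, fc_twoCycleParam_self]
    · refine absurd h (not_isPer_of_mapsTo hcycle ?_ ?_)
      · rintro (h | h : _ = _ ∨ _ = _) <;> linarith
      · rw [← neg_neg ((a : ℚ) + 1), fc_neg, neg_add']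
        simp [fc_twoCycleParam_neg_sub_one]
  · rintro (rfl | rfl)
    · exact isPer_twoCycleParam_self a
    · exact isPer_twoCycleParam_neg_sub_one a

theorem strictAnti_twoCycleParam_succ : StrictAnti fun n : ℕ => twoCycleParam (n + 1) :=
  strictAnti_nat_of_succ_lt fun n => by
    simp only [twoCycleParam]
    push_cast
    nlinarith

end TwoCycleParam

/-- Graph 4(2): infinitely many `c ∈ ℚ` with exactly 4 rational preperiodic points,
exactly 2 of them periodic, the two periodic points forming a 2-cycle. -/
theorem graph_4_2 :
    {c : ℚ | {x : ℚ | IsPreper c x}.ncard = 4 ∧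
      ∃ a b : ℚ, a ≠ b ∧ {x : ℚ | IsPer c x} = {a, b} ∧
        fc c a = b ∧ fc c b = a}.Infinite := by
  refine Set.infinite_of_injective_forall_mem
    (Int.cast_injective.comp strictAnti_twoCycleParam_succ.injective) fun n => ?_
  have ha : (1 : ℤ) ≤ n + 1 := by omega
  refine ⟨ncard_setOf_isPreper_twoCycleParam ha, _, _, ?_, setOf_isPer_twoCycleParam ha,
    fc_twoCycleParam_self _, fc_twoCycleParam_neg_sub_one _⟩
  push_cast
  linarith
end

section
/- There is a bound P such that for every prime number p > P, setting c = −3/4 − 1/p², the map f_c(z) = z² + c has exactly 4 rational preperiodic points, namely 1/2 + 1/p, 1/2 − 1/p, −1/2 + 1/p, −1/2 − 1/p; moreover the points −1/2 + 1/p and −1/2 − 1/p form a 2-cycle under f_c. -/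
/-!
Write `c = -(3p² + 4)/(4p²)`. Conjugating `f_c` by `z ↦ 2pz` gives `w ↦ (w² - 3p² - 4)/(2p)`,
which squares denominators, so every preperiodic point is `a/(2p)` with `a ∈ ℤ`, and the
escape estimate `|x| ≤ 2` gives `|a| ≤ 4p`. Integrality of the image `b/(2p)` means
`a² - 3p² - 4 = 2pb`, so `a` is odd and `a ≡ ±2 (mod p)`, i.e. `|a| ∈ {p ± 2, 3p ± 2}`; but
`±(3p ± 2)` is sent to `3p ± 6`, which is not of this form. The remaining points `±1/2 ± 1/p`
are the 2-cycle `-1/2 ± 1/p` and its two other preimages.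
-/

theorem IsPreper.iterate {c x : ℚ} (h : IsPreper c x) (k : ℕ) : IsPreper c ((fc c)^[k] x) := by
  obtain ⟨m, n, hmn, he⟩ := h
  refine ⟨m, n, hmn, ?_⟩
  rw [← Function.iterate_add_apply, ← Function.iterate_add_apply, Nat.add_comm m,
    Nat.add_comm n, Function.iterate_add_apply, Function.iterate_add_apply, he]

theorem IsPreper.fc_apply {c x : ℚ} (h : IsPreper c x) : IsPreper c (fc c x) :=
  h.iterate 1

theorem IsPreper.of_fc_apply {c x : ℚ} (h : IsPreper c (fc c x)) : IsPreper c x := by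
  obtain ⟨m, n, hmn, he⟩ := h
  exact ⟨m + 1, n + 1, Nat.succ_lt_succ hmn, by rwa [Function.iterate_succ_apply,
    Function.iterate_succ_apply]⟩

theorem isPreper_of_fc_fc_eq {c x : ℚ} (h : fc c (fc c x) = x) : IsPreper c x :=
  ⟨0, 2, two_pos, h.symm⟩

theorem not_isPreper_of_escape {α : Type*} [Preorder α] {c x : ℚ} (φ : ℚ → α) {b : α}
    (hx : b < φ x) (hφ : ∀ y, b < φ y → φ y < φ (fc c y)) : ¬ IsPreper c x := by
  rintro ⟨m, n, hmn, he⟩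
  have hb : ∀ n, b < φ ((fc c)^[n] x) := fun n => by
    induction n with
    | zero => exact hx
    | succ n ih => rw [Function.iterate_succ_apply']; exact ih.trans (hφ _ ih)
  have hmono : StrictMono fun n => φ ((fc c)^[n] x) := strictMono_nat_of_lt_succ fun n => by
    simpa only [Function.iterate_succ_apply'] using hφ _ (hb n)
  exact hmn.ne (hmono.injective (congrArg φ he))

theorem IsPreper.abs_le_two {c x : ℚ} (hc : |c| ≤ 2) (h : IsPreper c x) : |x| ≤ 2 := by
  by_contra! hx
  refine not_isPreper_of_escape abs hx (fun y hy => ?_) h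
  have h1 := le_abs_self (y ^ 2 + c)
  have h2 := neg_abs_le c
  have h3 := sq_abs y
  simp only [fc]
  nlinarith

theorem den_sq_dvd_den_div (w : ℚ) (k D : ℤ) (hD : D ≠ 0) :
    w.den ^ 2 ∣ ((w ^ 2 + k) / D).den := by
  have h := Rat.mul_den_dvd ((w ^ 2 + k) / D) D
  rwa [div_mul_cancel₀ _ (Int.cast_ne_zero.mpr hD), Rat.add_intCast_den, Rat.den_pow,
    Rat.den_intCast, mul_one] at h

theorem IsPreper.exists_int_mul_eq {c x : ℚ} {D k : ℤ} (hk : (D : ℚ) ^ 2 * c = k)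
    (h : IsPreper c x) : ∃ a : ℤ, (D : ℚ) * x = a := by
  rcases eq_or_ne D 0 with rfl | hD
  · exact ⟨0, by simp⟩
  -- conjugated by `z ↦ D z`, `f_c` becomes `w ↦ (w² + k)/D`, which squares denominators
  have hconj : ∀ y, (D : ℚ) * fc c y = (((D : ℚ) * y) ^ 2 + k) / D := fun y => by
    rw [← hk, fc, eq_div_iff (Int.cast_ne_zero.mpr hD)]
    ring
  have hden : ((D : ℚ) * x).den = 1 := by
    by_contra! hx
    refine not_isPreper_of_escape (fun y => ((D : ℚ) * y).den) (b := 1)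
      (by have := Rat.den_pos ((D : ℚ) * x); omega) (fun y hy => ?_) h
    rw [hconj]
    exact (lt_self_pow₀ hy one_lt_two).trans_le
      (Nat.le_of_dvd (Rat.den_pos _) (den_sq_dvd_den_div _ k D hD))
  exact ⟨_, (Rat.coe_int_num_of_den_eq_one hden).symm⟩

theorem mul_mul_fc (D c y : ℚ) : D * (D * fc c y) = (D * y) ^ 2 + D ^ 2 * c := by
  rw [fc]; ring

section
variable {p a b : ℤ}

theorem eq_of_dvd_sub_two (hp : 3 ≤ p) (hodd : Odd p)
    (h : 2 * p * b = a ^ 2 - 3 * p ^ 2 - 4) (ha : |a| ≤ 4 * p) (hdvd : p ∣ a - 2) :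
    a = p + 2 ∨ a = -p + 2 ∨ a = 3 * p + 2 ∨ a = -3 * p + 2 := by
  obtain ⟨k, hk⟩ := hdvd
  obtain ⟨s, rfl⟩ := hodd
  -- reading this modulo 2 shows that `k` is odd
  have hb : 2 * b = k ^ 2 * (2 * s + 1) + 4 * k - 3 * (2 * s + 1) := by
    refine mul_left_cancel₀ (show 2 * s + 1 ≠ 0 by omega) ?_
    rw [show a = (2 * s + 1) * k + 2 by linarith] at h
    linear_combination h
  rw [abs_le] at ha
  have hk3 : k ≤ 3 := by nlinarith
  have hk4 : -4 ≤ k := by nlinarith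
  interval_cases k <;> omega

theorem abs_eq_of_two_mul_eq (hp : Prime p) (hp3 : 3 ≤ p) (hodd : Odd p)
    (h : 2 * p * b = a ^ 2 - 3 * p ^ 2 - 4) (ha : |a| ≤ 4 * p) :
    |a| = p + 2 ∨ |a| = p - 2 ∨ |a| = 3 * p + 2 ∨ |a| = 3 * p - 2 := by
  have hdvd : p ∣ (a - 2) * (a + 2) := ⟨3 * p + 2 * b, by linear_combination -h⟩
  rcases hp.dvd_or_dvd hdvd with h2 | h2
  · have := eq_of_dvd_sub_two hp3 hodd h ha h2
    have := abs_cases a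
    omega
  · have := eq_of_dvd_sub_two (a := -a) (b := b) hp3 hodd (by linear_combination h)
      (by rwa [abs_neg]) (by rw [show -a - 2 = -(a + 2) by ring]; exact h2.neg_right)
    have := abs_cases a
    omega

theorem abs_eq_of_two_mul_eq_of_two_mul_eq {d : ℤ} (hp : Prime p) (hp3 : 3 ≤ p) (hodd : Odd p)
    (hab : 2 * p * b = a ^ 2 - 3 * p ^ 2 - 4) (hbd : 2 * p * d = b ^ 2 - 3 * p ^ 2 - 4)
    (ha : |a| ≤ 4 * p) (hb : |b| ≤ 4 * p) : |a| = p + 2 ∨ |a| = p - 2 := by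
  have hp0 : p ≠ 0 := by omega
  have hb' := abs_eq_of_two_mul_eq hp hp3 hodd hbd hb
  have := abs_cases b
  -- `|a| = 3p ± 2` would force `b = 3p ± 6`
  rcases abs_eq_of_two_mul_eq hp hp3 hodd hab ha with h | h | h | h
  · exact .inl h
  · exact .inr h
  · have ha2 : a ^ 2 = (3 * p + 2) ^ 2 := by rw [← sq_abs, h]
    have : 2 * b = 6 * p + 12 := mul_left_cancel₀ hp0 (by linear_combination hab + ha2)
    omega
  · have ha2 : a ^ 2 = (3 * p - 2) ^ 2 := by rw [← sq_abs, h]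
    have : 2 * b = 6 * p - 12 := mul_left_cancel₀ hp0 (by linear_combination hab + ha2)
    obtain ⟨s, rfl⟩ := hodd
    omega

end

section
variable (u : ℚ)

theorem fc_half_add : fc (-(3 / 4) - u ^ 2) (1 / 2 + u) = -(1 / 2) + u := by
  rw [fc]; ring

theorem fc_half_sub : fc (-(3 / 4) - u ^ 2) (1 / 2 - u) = -(1 / 2) - u := by
  rw [fc]; ring

theorem fc_neg_half_add : fc (-(3 / 4) - u ^ 2) (-(1 / 2) + u) = -(1 / 2) - u := by
  rw [fc]; ring

theorem fc_neg_half_sub : fc (-(3 / 4) - u ^ 2) (-(1 / 2) - u) = -(1 / 2) + u := by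
  rw [fc]; ring

theorem isPreper_neg_half_add : IsPreper (-(3 / 4) - u ^ 2) (-(1 / 2) + u) :=
  isPreper_of_fc_fc_eq (by rw [fc_neg_half_add, fc_neg_half_sub])

theorem isPreper_neg_half_sub : IsPreper (-(3 / 4) - u ^ 2) (-(1 / 2) - u) :=
  isPreper_of_fc_fc_eq (by rw [fc_neg_half_sub, fc_neg_half_add])

theorem isPreper_half_add : IsPreper (-(3 / 4) - u ^ 2) (1 / 2 + u) :=
  IsPreper.of_fc_apply (by rw [fc_half_add]; exact isPreper_neg_half_add u)

theorem isPreper_half_sub : IsPreper (-(3 / 4) - u ^ 2) (1 / 2 - u) :=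
  IsPreper.of_fc_apply (by rw [fc_half_sub]; exact isPreper_neg_half_sub u)

end

theorem ncard_pm_half_pm {u : ℚ} (h0 : 0 < u) (h1 : u < 1 / 2) :
    ({1 / 2 + u, 1 / 2 - u, -(1 / 2) + u, -(1 / 2) - u} : Set ℚ).ncard = 4 := by
  rw [Set.ncard_insert_of_notMem, Set.ncard_insert_of_notMem, Set.ncard_pair]
  · intro h; linarith
  · simp only [Set.mem_insert_iff, Set.mem_singleton_iff]
    rintro (h | h) <;> linarith
  · simp only [Set.mem_insert_iff, Set.mem_singleton_iff]
    rintro (h | h | h) <;> linarith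

section
variable {p : ℕ}

theorem two_mul_sq_mul_eq_neg (hp : p ≠ 0) :
    ((2 * p : ℤ) : ℚ) ^ 2 * (-(3 / 4) - 1 / (p : ℚ) ^ 2) = (-(3 * p ^ 2 + 4) : ℤ) := by
  push_cast
  field_simp
  ring

theorem IsPreper.exists_int_two_mul_eq (hp : p ≠ 0) {x : ℚ}
    (h : IsPreper (-(3 / 4) - 1 / (p : ℚ) ^ 2) x) :
    ∃ a : ℤ, 2 * (p : ℚ) * x = a ∧ |a| ≤ 4 * p := by
  obtain ⟨a, ha⟩ := h.exists_int_mul_eq (two_mul_sq_mul_eq_neg hp)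
  have hc : |(-(3 / 4) - 1 / (p : ℚ) ^ 2)| ≤ 2 := by
    have hp1 : (1 : ℚ) ≤ p := by exact_mod_cast Nat.one_le_iff_ne_zero.mpr hp
    have : 1 / (p : ℚ) ^ 2 ≤ 1 := div_le_one_of_le₀ (one_le_pow₀ hp1) (by positivity)
    rw [abs_le]
    constructor <;> linarith [show 0 ≤ 1 / (p : ℚ) ^ 2 by positivity]
  push_cast at ha
  refine ⟨a, ha, ?_⟩
  have : |(a : ℚ)| ≤ 4 * p := by
    rw [← ha, abs_mul, abs_of_nonneg (by positivity)]
    nlinarith [h.abs_le_two hc, abs_nonneg x]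
  exact_mod_cast this

theorem two_mul_eq_sq_sub (hp : p ≠ 0) {y : ℚ} {a b : ℤ} (ha : 2 * (p : ℚ) * y = a)
    (hb : 2 * (p : ℚ) * fc (-(3 / 4) - 1 / (p : ℚ) ^ 2) y = b) :
    2 * (p : ℤ) * b = a ^ 2 - 3 * p ^ 2 - 4 := by
  have h := mul_mul_fc (2 * p) (-(3 / 4) - 1 / (p : ℚ) ^ 2) y
  have hk := two_mul_sq_mul_eq_neg hp
  push_cast at hk
  rw [hb, ha, hk] at h
  have : ((2 * p * b : ℤ) : ℚ) = ((a ^ 2 - 3 * p ^ 2 - 4 : ℤ) : ℚ) := by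
    push_cast
    linear_combination h
  exact_mod_cast this

theorem isPreper_iff_of_prime (hp : p.Prime) (hp2 : 2 < p) (x : ℚ) :
    IsPreper (-(3 / 4) - 1 / (p : ℚ) ^ 2) x ↔
      x = 1 / 2 + 1 / (p : ℚ) ∨ x = 1 / 2 - 1 / (p : ℚ) ∨
        x = -(1 / 2) + 1 / (p : ℚ) ∨ x = -(1 / 2) - 1 / (p : ℚ) := by
  have hp0 : p ≠ 0 := hp.ne_zero
  constructor
  · intro h
    obtain ⟨a, hxa, ha⟩ := h.exists_int_two_mul_eq hp0
    obtain ⟨b, hxb, hb⟩ := h.fc_apply.exists_int_two_mul_eq hp0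
    obtain ⟨d, hxd, -⟩ := h.fc_apply.fc_apply.exists_int_two_mul_eq hp0
    have hpZ : Prime (p : ℤ) := Nat.prime_iff_prime_int.mp hp
    have hodd : Odd (p : ℤ) := by exact_mod_cast hp.odd_of_ne_two (by omega)
    have key := abs_eq_of_two_mul_eq_of_two_mul_eq hpZ (by omega) hodd
      (two_mul_eq_sq_sub hp0 hxa hxb) (two_mul_eq_sq_sub hp0 hxb hxd) ha hb
    have : a = p + 2 ∨ a = p - 2 ∨ a = -p + 2 ∨ a = -p - 2 := by
      have := abs_cases a
      omega
    have hpQ : (p : ℚ) ≠ 0 := by exact_mod_cast hp0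
    rcases this with rfl | rfl | rfl | rfl <;>
      [left; (right; left); (right; right; left); (right; right; right)] <;>
      · push_cast at hxa
        field_simp
        linear_combination hxa
  · rw [← one_div_pow]
    rintro (rfl | rfl | rfl | rfl)
    exacts [isPreper_half_add _, isPreper_half_sub _, isPreper_neg_half_add _,
      isPreper_neg_half_sub _]

end

/-- For all sufficiently large primes `p` and `c = -3/4 - 1/p²`, the map `f_c` has exactly
the four rational preperiodic points `±1/2 ± 1/p`, and `-1/2 + 1/p`, `-1/2 - 1/p`
form a 2-cycle. -/
theorem graph_4_2_family :
    ∃ P : ℕ, ∀ p : ℕ, p.Prime → P < p →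
      letI c : ℚ := -(3 / 4) - 1 / (p : ℚ) ^ 2
      {x : ℚ | IsPreper c x} =
        {1 / 2 + 1 / (p : ℚ), 1 / 2 - 1 / (p : ℚ),
          -(1 / 2) + 1 / (p : ℚ), -(1 / 2) - 1 / (p : ℚ)} ∧
      {x : ℚ | IsPreper c x}.ncard = 4 ∧
      (-(1 / 2) + 1 / (p : ℚ) : ℚ) ≠ -(1 / 2) - 1 / (p : ℚ) ∧
      fc c (-(1 / 2) + 1 / (p : ℚ)) = -(1 / 2) - 1 / (p : ℚ) ∧
      fc c (-(1 / 2) - 1 / (p : ℚ)) = -(1 / 2) + 1 / (p : ℚ) := by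
  refine ⟨2, fun p hp hp2 => ?_⟩
  have hset := Set.ext (isPreper_iff_of_prime hp hp2)
  have hu : 0 < 1 / (p : ℚ) := by positivity
  have hu2 : 1 / (p : ℚ) < 1 / 2 := by
    rw [div_lt_div_iff₀ (by positivity) two_pos]
    exact_mod_cast (by omega : 1 * 2 < 1 * p)
  refine ⟨hset, hset ▸ ncard_pm_half_pm hu hu2, by linarith, ?_, ?_⟩ <;> rw [← one_div_pow]
  exacts [fc_neg_half_add _, fc_neg_half_sub _]
end
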